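/- Let 0 ≤ m₀ ≤ m₁ be real numbers and let k ≥ 1 be a natural number. Define the Poisson-based probability of false alarm P₀ = ∑_{x=k}^∞ Poi(x;m₀) and the Poisson-based probability of detection P_d = ∑_{x=k}^∞ Poi(x;m₁). Suppose the vector-based test has the same probability of false alarm, Q₀ = P₀, and its probability of detection Q_d is determined by (1/2)·((1 − Q₀) + Q_d) = Q_c, where Q_c = (1/2)·(1 + √(1 − e^{−(m₁−m₀)})). Then Q_d ≥ P_d. -/

import Mathlib

/-- Poisson probability mass function with mean `m` evaluated at `x`
(with the convention `0 ^ 0 = 1`). -/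
noncomputable def poi (m : ℝ) (x : ℕ) : ℝ := Real.exp (-m) * m ^ x / (Nat.factorial x)

/-!
With equal false-alarm probabilities the vector test detects with `Q_d = Q₀ + √(1 - e^{-(m₁-m₀)})`,
so it suffices to bound `P_d - Q₀`, the mass that the set `{x ≥ k}` gains in passing from
`Poi(m₀)` to `Poi(m₁)`. Such a gain is at most the total variation distance, and Cauchy–Schwarz
applied to `|q - p| = |√q - √p| (√q + √p)` bounds that by `√(1 - B²)`, where `B = ∑ √(p q)` is the
Bhattacharyya coefficient. For Poisson laws `B = exp (√(m₀ m₁) - (m₀ + m₁) / 2)`, and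
`m₀ ≤ √(m₀ m₁)` gives `B² ≥ e^{-(m₁-m₀)}`.
-/

open Real

section

variable {α : Type*}

lemma tsum_mul_le_sqrt_mul_sqrt {f g : α → ℝ} (hf : ∀ i, 0 ≤ f i) (hg : ∀ i, 0 ≤ g i)
    (hf₂ : Summable fun i => f i ^ 2) (hg₂ : Summable fun i => g i ^ 2) :
    ∑' i, f i * g i ≤ √(∑' i, f i ^ 2) * √(∑' i, g i ^ 2) := by
  have h := inner_le_Lp_mul_Lq_tsum_of_nonneg .two_two hf hg
    (by simpa only [rpow_two] using hf₂) (by simpa only [rpow_two] using hg₂)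
  simpa only [rpow_two, sqrt_eq_rpow] using h

lemma tsum_abs_sub_le_two_mul_sqrt_one_sub_sq {p q : α → ℝ} (hp₀ : ∀ x, 0 ≤ p x)
    (hq₀ : ∀ x, 0 ≤ q x) (hp : HasSum p 1) (hq : HasSum q 1) {B : ℝ}
    (hB : HasSum (fun x => √(p x * q x)) B) :
    ∑' x, |q x - p x| ≤ 2 * √(1 - B ^ 2) := by
  have hsq : ∀ x, √(q x) ^ 2 = q x ∧ √(p x) ^ 2 = p x ∧ √(q x) * √(p x) = √(p x * q x) :=
    fun x => ⟨sq_sqrt (hq₀ x), sq_sqrt (hp₀ x), by rw [← sqrt_mul (hq₀ x), mul_comm]⟩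
  have hdiff : HasSum (fun x => |√(q x) - √(p x)| ^ 2) (2 - 2 * B) := by
    have h := (hq.add hp).sub (hB.mul_left 2)
    rw [one_add_one_eq_two] at h
    refine h.congr_fun fun x => ?_
    obtain ⟨h₁, h₂, h₃⟩ := hsq x
    rw [sq_abs]; linear_combination h₁ + h₂ - 2 * h₃
  have hsum : HasSum (fun x => (√(q x) + √(p x)) ^ 2) (2 + 2 * B) := by
    have h := (hq.add hp).add (hB.mul_left 2)
    rw [one_add_one_eq_two] at h
    refine h.congr_fun fun x => ?_
    obtain ⟨h₁, h₂, h₃⟩ := hsq x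
    linear_combination h₁ + h₂ + 2 * h₃
  have hfactor : ∀ x, |√(q x) - √(p x)| * (√(q x) + √(p x)) = |q x - p x| := by
    intro x
    obtain ⟨h₁, h₂, -⟩ := hsq x
    rw [← abs_of_nonneg (add_nonneg (sqrt_nonneg (q x)) (sqrt_nonneg (p x))), ← abs_mul]
    congr 1
    linear_combination h₁ - h₂
  calc ∑' x, |q x - p x|
      = ∑' x, |√(q x) - √(p x)| * (√(q x) + √(p x)) := (tsum_congr hfactor).symm
    _ ≤ √(2 - 2 * B) * √(2 + 2 * B) := by
      rw [← hdiff.tsum_eq, ← hsum.tsum_eq]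
      exact tsum_mul_le_sqrt_mul_sqrt (fun x => abs_nonneg _)
        (fun x => add_nonneg (sqrt_nonneg _) (sqrt_nonneg _)) hdiff.summable hsum.summable
    _ = 2 * √(1 - B ^ 2) := by
      rw [← sqrt_mul' _ (by linarith [hB.nonneg fun x => sqrt_nonneg _]),
        show (2 - 2 * B) * (2 + 2 * B) = 2 ^ 2 * (1 - B ^ 2) by ring,
        sqrt_mul (by positivity), sqrt_sq zero_le_two]

lemma tsum_ite_sub_tsum_ite_le_half_tsum_abs_sub {p q : α → ℝ} {s : ℝ} (hp : HasSum p s)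
    (hq : HasSum q s) (P : α → Prop) [DecidablePred P] :
    ∑' x, (if P x then q x else 0) - ∑' x, (if P x then p x else 0)
      ≤ (∑' x, |q x - p x|) / 2 := by
  have hrestrict : ∀ {f : α → ℝ}, Summable f → Summable fun x => if P x then f x else 0 := by
    intro f hf
    have e : (fun x => if P x then f x else 0) = {x | P x}.indicator f := by
      ext x; simp [Set.indicator_apply]
    exact e ▸ hf.indicator _
  have hbound : HasSum (fun x => (|q x - p x| + (q x - p x)) / 2) ((∑' x, |q x - p x|) / 2) := by
    have hzero : HasSum (fun x => q x - p x) 0 := sub_self s ▸ hq.sub hp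
    simpa only [add_zero] using ((hq.sub hp).summable.abs.hasSum.add hzero).div_const 2
  rw [← (hrestrict hq.summable).tsum_sub (hrestrict hp.summable)]
  refine hasSum_le (fun x => ?_) ((hrestrict hq.summable).sub (hrestrict hp.summable)).hasSum hbound
  split_ifs
  · linarith [le_abs_self (q x - p x)]
  · linarith [neg_abs_le (q x - p x)]

end

noncomputable def poiAffinity (a b : ℝ) : ℝ := exp (√(a * b) - (a + b) / 2)

lemma poi_nonneg {m : ℝ} (hm : 0 ≤ m) (x : ℕ) : 0 ≤ poi m x := by
  unfold poi; positivity

lemma hasSum_poi (m : ℝ) : HasSum (fun x => poi m x) 1 := by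
  have h := (NormedSpace.expSeries_div_hasSum_exp m).mul_left (exp (-m))
  rw [← exp_eq_exp_ℝ, ← exp_add, neg_add_cancel, exp_zero] at h
  simpa only [poi, mul_div_assoc] using h

lemma sqrt_poi_mul_poi {a b : ℝ} (ha : 0 ≤ a) (hb : 0 ≤ b) (x : ℕ) :
    √(poi a x * poi b x) = poiAffinity a b * poi √(a * b) x := by
  have hnonneg : 0 ≤ poiAffinity a b * poi √(a * b) x :=
    mul_nonneg (exp_pos _).le (poi_nonneg (sqrt_nonneg _) x)
  rw [← sqrt_sq hnonneg]
  congr 1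
  have hexp : exp (-a) * exp (-b) = poiAffinity a b ^ 2 * exp (-√(a * b)) ^ 2 := by
    rw [poiAffinity, ← mul_pow, ← exp_add, ← exp_add, ← exp_nat_mul]; ring_nf
  have hpow : (√(a * b) ^ x) ^ 2 = a ^ x * b ^ x := by
    rw [← pow_mul, mul_comm x 2, pow_mul, sq_sqrt (mul_nonneg ha hb), mul_pow]
  simp only [poi]
  rw [mul_pow, div_pow, mul_pow, hpow]
  linear_combination (a ^ x * b ^ x / (x.factorial : ℝ) ^ 2) * hexp

lemma hasSum_sqrt_poi_mul_poi {a b : ℝ} (ha : 0 ≤ a) (hb : 0 ≤ b) :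
    HasSum (fun x => √(poi a x * poi b x)) (poiAffinity a b) := by
  simpa only [sqrt_poi_mul_poi ha hb, mul_one] using (hasSum_poi √(a * b)).mul_left _

lemma exp_neg_sub_le_poiAffinity_sq {m₀ m₁ : ℝ} (hm₀ : 0 ≤ m₀) (hm : m₀ ≤ m₁) :
    exp (-(m₁ - m₀)) ≤ poiAffinity m₀ m₁ ^ 2 := by
  have hsqrt : m₀ ≤ √(m₀ * m₁) := le_sqrt_of_sq_le (by nlinarith)
  rw [poiAffinity, ← exp_nat_mul, exp_le_exp]
  push_cast
  linarith

theorem vector_detection_ge_poisson_general (m₀ m₁ : ℝ) (hm₀ : 0 ≤ m₀) (hm : m₀ ≤ m₁)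
    (k : ℕ) (Q₀ Qd : ℝ)
    (hQ₀ : Q₀ = ∑' x : ℕ, if k ≤ x then poi m₀ x else 0)
    (hQd : (1 / 2) * ((1 - Q₀) + Qd) =
      (1 / 2) * (1 + Real.sqrt (1 - Real.exp (-(m₁ - m₀))))) :
    Qd ≥ ∑' x : ℕ, if k ≤ x then poi m₁ x else 0 := by
  have hm₁ : 0 ≤ m₁ := hm₀.trans hm
  have htail := tsum_ite_sub_tsum_ite_le_half_tsum_abs_sub (hasSum_poi m₀) (hasSum_poi m₁) (k ≤ ·)
  have htv := tsum_abs_sub_le_two_mul_sqrt_one_sub_sq (poi_nonneg hm₀) (poi_nonneg hm₁)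
    (hasSum_poi m₀) (hasSum_poi m₁) (hasSum_sqrt_poi_mul_poi hm₀ hm₁)
  have haff : √(1 - poiAffinity m₀ m₁ ^ 2) ≤ √(1 - exp (-(m₁ - m₀))) :=
    sqrt_le_sqrt (by linarith [exp_neg_sub_le_poiAffinity_sq hm₀ hm])
  linarith

/-- If the vector-based test has the same probability of false alarm as the Poisson-based
test and its probability of detection is determined by the Helstrom probability of correct
decision, then its probability of detection is at least the Poisson-based one. -/
theorem vector_detection_ge_poisson (m₀ m₁ : ℝ) (hm₀ : 0 ≤ m₀) (hm : m₀ ≤ m₁)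
    (k : ℕ) (hk : 1 ≤ k) (Q₀ Qd : ℝ)
    (hQ₀ : Q₀ = ∑' x : ℕ, if k ≤ x then poi m₀ x else 0)
    (hQd : (1 / 2) * ((1 - Q₀) + Qd) =
      (1 / 2) * (1 + Real.sqrt (1 - Real.exp (-(m₁ - m₀))))) :
    Qd ≥ ∑' x : ℕ, if k ≤ x then poi m₁ x else 0 :=
  vector_detection_ge_poisson_general m₀ m₁ hm₀ hm k Q₀ Qd hQ₀ hQd
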